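/- Let C ⊆ {0,1}^n be a code with all pairwise distances in {d_1,...,d_s}, d_i > 0. Then the family of polynomials {P_u : u ∈ C}, where P_u(x) = Π_{i=1}^s (d_i - ⟨x,1⟩ - ⟨u,1⟩ + 2⟨u,x⟩), is linearly independent in the real polynomial ring ℝ[x_1,...,x_n]. -/
import Mathlib


open MvPolynomial

/-- Hamming distance between real vectors. -/
noncomputable def hd {n : ℕ} (u v : Fin n → ℝ) : ℕ :=
  (Finset.univ.filter (fun j => u j ≠ v j)).card

/-- The polynomial `P_u(x) = ∏ i (d_i - ⟨x,1⟩ - ⟨u,1⟩ + 2⟨u,x⟩)` as an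
element of `ℝ[x_1,…,x_n]`. -/
noncomputable def P {n s : ℕ} (d : Fin s → ℕ) (u : Fin n → ℝ) :
    MvPolynomial (Fin n) ℝ :=
  ∏ i, (C (d i : ℝ) - (∑ j, X j) - C (∑ j, u j) + 2 * ∑ j, C (u j) * X j)

lemma hd_cast {n : ℕ} (u v : Fin n → ℝ) (hu : ∀ j, u j = 0 ∨ u j = 1)
    (hv : ∀ j, v j = 0 ∨ v j = 1) :
    ((hd u v : ℝ)) = ∑ j, v j + ∑ j, u j - 2 * ∑ j, u j * v j := by
  rw [hd, Finset.card_filter]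
  push_cast
  rw [← Finset.sum_add_distrib, Finset.mul_sum, ← Finset.sum_sub_distrib]
  apply Finset.sum_congr rfl
  intro j _
  rcases hu j with h | h <;> rcases hv j with h' | h' <;> simp [h, h'] <;> norm_num

lemma eval_P {n s : ℕ} (d : Fin s → ℕ) (u v : Fin n → ℝ)
    (hu : ∀ j, u j = 0 ∨ u j = 1) (hv : ∀ j, v j = 0 ∨ v j = 1) :
    eval v (P d u) = ∏ i, ((d i : ℝ) - (hd u v : ℝ)) := by
  rw [P]
  simp only [map_prod, map_add, map_sub, map_mul, map_sum, map_ofNat, eval_C, eval_X]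
  apply Finset.prod_congr rfl
  intro i _
  rw [hd_cast u v hu hv]
  ring

theorem stmt4 {n s : ℕ} (d : Fin s → ℕ) (hdpos : ∀ i, 0 < d i)
    (Co : Finset (Fin n → ℝ)) (hbin : ∀ u ∈ Co, ∀ j, u j = 0 ∨ u j = 1)
    (hdist : ∀ u ∈ Co, ∀ v ∈ Co, u ≠ v → ∃ i, hd u v = d i) :
    LinearIndependent ℝ (fun u : {x // x ∈ Co} => P d u.1) := by
  rw [linearIndependent_iff']
  intro t g hsum u hu
  have hv := congrArg (eval u.1) hsum
  simp only [map_sum, smul_eq_C_mul, map_mul, eval_C, map_zero] at hv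
  rw [Finset.sum_eq_single u] at hv
  · have h0 : eval u.1 (P d u.1) = ∏ i, ((d i : ℝ) - (hd u.1 u.1 : ℝ)) :=
      eval_P d u.1 u.1 (hbin u.1 u.2) (hbin u.1 u.2)
    have hdd : hd u.1 u.1 = 0 := by simp [hd]
    rw [hdd] at h0
    have hne : eval u.1 (P d u.1) ≠ 0 := by
      rw [h0]
      refine Finset.prod_ne_zero_iff.mpr fun i _ => ?_
      have := hdpos i
      simp only [Nat.cast_zero, sub_zero]
      exact_mod_cast this.ne'
    exact (mul_eq_zero.mp hv).resolve_right hne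
  · intro w hw hwu
    have hne : w.1 ≠ u.1 := fun h => hwu (Subtype.ext h)
    obtain ⟨i, hi⟩ := hdist w.1 w.2 u.1 u.2 hne
    rw [eval_P d w.1 u.1 (hbin w.1 w.2) (hbin u.1 u.2),
      Finset.prod_eq_zero (Finset.mem_univ i)]
    · ring
    · rw [hi]; ring
  · intro h; exact absurd hu h
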